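/- Identification of the natural mediated mean: in the potential-outcomes mediation model with binary treatment and binary mediator, under consistency, the four ignorability conditions, and positivity, for all d, d' ∈ {0,1} we have E[Y(d, M(d'))] = E[ Σ_{m∈{0,1}} μ(X,d,m) f(m|X,d') ] = φ(d,d'). -/

import Mathlib

open MeasureTheory ProbabilityTheory
open scoped ENNReal

/-! Conditional independence of `F` and `G` given `m'` makes the regular conditional law of
`(F, G)` a product measure almost surely, so `E[F G | m'] = E[F | m'] E[G | m']`. Applied to
indicators of the discrete variables, each ignorability condition factors a conditional mean, and
the consistency conditions rewrite the factored products in observable terms: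
`P(M(d') = m | X) a(d'|X) = E[1{D = d'} 1{M = m} | X] = f(m|X,d') a(d'|X)` and, first given
`(X, D)` on `{D = d}` and then given `X`, `E[Y(d,m) | X] = μ(X,d,m)`. Positivity lets us cancel
`a` and `f`. Finally the cross-world condition gives
`E[Y(d,m) 1{M(d') = m} | X] = μ(X,d,m) f(m|X,d')`; take expectations and sum over `m`. -/

/-- Potential-outcomes mediation model with binary treatment and binary mediator:
observed data `(X, D, M, Y)`, potential mediators `Mpot d`, potential outcomes
`Ypot d m`, consistency, the four ignorability conditions, and positivity.
`a d x = P(D = d | X = x)`, `f m x d = P(M = m | X = x, D = d)`,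
`u x d m = E[Y | X = x, D = d, M = m]`. -/
structure PotentialOutcomeModel (Ω 𝓧 : Type) [MeasurableSpace Ω] [StandardBorelSpace Ω]
    [MeasurableSpace 𝓧] (c Cbar ρlo ρhi : ℝ) where
  P : Measure Ω
  isProb : IsProbabilityMeasure P
  X : Ω → 𝓧
  D : Ω → Fin 2
  M : Ω → Fin 2
  Y : Ω → ℝ
  Mpot : Fin 2 → Ω → Fin 2
  Ypot : Fin 2 → Fin 2 → Ω → ℝ
  hX : Measurable X
  hD : Measurable D
  hM : Measurable M
  hY : Integrable Y P
  hMpot : ∀ d, Measurable (Mpot d)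
  hYpot_meas : ∀ d m, Measurable (Ypot d m)
  hYpot_int : ∀ d m, Integrable (Ypot d m) P
  hc : 0 < c
  hcC : c ≤ Cbar
  hC : Cbar < 1
  hρ1 : 0 < ρlo
  hρ2 : ρlo ≤ ρhi
  hρ3 : ρhi < 1
  /-- consistency for the mediator : `M = M(D)` a.s. -/
  hconsM : ∀ᵐ ω ∂P, M ω = Mpot (D ω) ω
  /-- consistency for the outcome : `Y = Y(D, M)` a.s. -/
  hconsY : ∀ᵐ ω ∂P, Y ω = Ypot (D ω) (M ω) ω
  /-- no unmeasured treatment-outcome confounding : `Y(d,m) ⫫ D | X`. -/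
  hYD : ∀ d m : Fin 2, haveI := isProb;
    CondIndepFun (MeasurableSpace.comap X inferInstance) hX.comap_le (Ypot d m) D P
  /-- no unmeasured mediator-outcome confounding : `Y(d,m) ⫫ M | (X, D)`. -/
  hYM : ∀ d m : Fin 2, haveI := isProb;
    CondIndepFun (MeasurableSpace.comap (fun ω => (X ω, D ω)) inferInstance)
      (Measurable.comap_le (hX.prodMk hD)) (Ypot d m) M P
  /-- no unmeasured treatment-mediator confounding : `M(d) ⫫ D | X`. -/
  hMD : ∀ d : Fin 2, haveI := isProb;
    CondIndepFun (MeasurableSpace.comap X inferInstance) hX.comap_le (Mpot d) D P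
  /-- cross-world condition : `Y(d,m) ⫫ M(d') | X`. -/
  hcross : ∀ d d' m : Fin 2, haveI := isProb;
    CondIndepFun (MeasurableSpace.comap X inferInstance) hX.comap_le (Ypot d m) (Mpot d') P
  a : Fin 2 → 𝓧 → ℝ
  f : Fin 2 → 𝓧 → Fin 2 → ℝ
  u : 𝓧 → Fin 2 → Fin 2 → ℝ
  ha_meas : ∀ d, Measurable (a d)
  hf_meas : ∀ m d, Measurable fun x => f m x d
  hu_meas : ∀ d m, Measurable fun x => u x d m
  ha_eq : ∀ d, (fun ω => a d (X ω)) =ᵐ[P]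
    P[(fun ω => if D ω = d then (1 : ℝ) else 0) | MeasurableSpace.comap X inferInstance]
  hf_eq : ∀ m, (fun ω => f m (X ω) (D ω)) =ᵐ[P]
    P[(fun ω => if M ω = m then (1 : ℝ) else 0) |
      MeasurableSpace.comap (fun ω => (X ω, D ω)) inferInstance]
  hu_eq : (fun ω => u (X ω) (D ω) (M ω)) =ᵐ[P]
    P[Y | MeasurableSpace.comap (fun ω => (X ω, D ω, M ω)) inferInstance]
  /-- positivity of the propensity score. -/
  ha_bdd : ∀ d, ∀ᵐ ω ∂P, a d (X ω) ∈ Set.Ioo c Cbar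
  /-- positivity of the mediator density. -/
  hf_bdd : ∀ m d, ∀ᵐ ω ∂P, f m (X ω) d ∈ Set.Icc ρlo ρhi

section Indicator

variable {Ω β : Type*} [MeasurableSpace Ω] [MeasurableSpace β] [MeasurableSingletonClass β]
  [DecidableEq β]
  {μ : Measure Ω} {G : Ω → β}

lemma Measurable.ite_eq_one_zero (hG : Measurable G) (b : β) :
    Measurable fun ω => if G ω = b then (1 : ℝ) else 0 :=
  Measurable.ite (hG (measurableSet_singleton b)) measurable_const measurable_const

lemma MeasureTheory.Integrable.ite_eq_one_zero_mul {g : Ω → ℝ} (hg : Integrable g μ)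
    (hG : Measurable G) (b : β) :
    Integrable (fun ω => (if G ω = b then (1 : ℝ) else 0) * g ω) μ :=
  hg.bdd_mul (c := 1) (hG.ite_eq_one_zero b).aestronglyMeasurable
    (ae_of_all _ fun ω => by split_ifs <;> simp)

lemma MeasureTheory.Integrable.mul_ite_eq_one_zero {g : Ω → ℝ} (hg : Integrable g μ)
    (hG : Measurable G) (b : β) :
    Integrable (fun ω => g ω * (if G ω = b then (1 : ℝ) else 0)) μ :=
  hg.mul_bdd (c := 1) (hG.ite_eq_one_zero b).aestronglyMeasurable
    (ae_of_all _ fun ω => by split_ifs <;> simp)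

lemma MeasureTheory.integrable_ite_eq_one_zero [IsFiniteMeasure μ] (hG : Measurable G) (b : β) :
    Integrable (fun ω => if G ω = b then (1 : ℝ) else 0) μ := by
  simpa using (integrable_const (1 : ℝ)).ite_eq_one_zero_mul (μ := μ) hG b

end Indicator

lemma Measurable.stronglyMeasurable_comp_comap {α β : Type*} [mβ : MeasurableSpace β]
    {v : β → ℝ} (hv : Measurable v) (h : α → β) :
    StronglyMeasurable[mβ.comap h] (v ∘ h) :=
  (hv.comp (comap_measurable h)).stronglyMeasurable

lemma Filter.EventuallyEq.of_mul_right {α : Type*} {l : Filter α} {f g a : α → ℝ}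
    (h : (fun x => f x * a x) =ᶠ[l] fun x => g x * a x) (ha : ∀ᶠ x in l, a x ≠ 0) :
    f =ᶠ[l] g := by
  filter_upwards [h, ha] with x hx hax using mul_right_cancel₀ hax hx

namespace ProbabilityTheory.CondIndepFun

variable {Ω β : Type*} {m' mΩ : MeasurableSpace Ω} [StandardBorelSpace Ω] {hm' : m' ≤ mΩ}
  {μ : Measure Ω} [IsFiniteMeasure μ]

theorem condExp_mul {F G : Ω → ℝ} (hind : CondIndepFun m' hm' F G μ) (hF : Measurable F)
    (hG : Measurable G) (hFi : Integrable F μ) (hGi : Integrable G μ)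
    (hFGi : Integrable (F * G) μ) :
    μ[F * G | m'] =ᵐ[μ] μ[F | m'] * μ[G | m'] := by
  have hker := ae_of_ae_trim hm' ((condIndepFun_iff_map_prod_eq_prod_map_map hF hG).1 hind)
  filter_upwards [hker, condExp_ae_eq_integral_condExpKernel hm' hFGi,
    condExp_ae_eq_integral_condExpKernel hm' hFi,
    condExp_ae_eq_integral_condExpKernel hm' hGi] with ω hω hFG hF' hG'
  have hindω : F ⟂ᵢ[condExpKernel μ m' ω] G := by
    rw [indepFun_iff_map_prod_eq_prod_map_map hF.aemeasurable hG.aemeasurable]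
    simpa [Kernel.map_apply _ hF, Kernel.map_apply _ hG, Kernel.map_apply _ (hF.prodMk hG),
      Kernel.prod_apply] using hω
  rw [hFG, Pi.mul_apply, hF', hG']
  exact hindω.integral_mul_eq_mul_integral hF.aestronglyMeasurable hG.aestronglyMeasurable

lemma condExp_mul_ite_eq_one_zero [MeasurableSpace β] [MeasurableSingletonClass β]
    [DecidableEq β] {F : Ω → ℝ} {G : Ω → β} (hind : CondIndepFun m' hm' F G μ)
    (hF : Measurable F) (hFi : Integrable F μ) (hG : Measurable G) (b : β) :
    μ[fun ω => F ω * (if G ω = b then (1 : ℝ) else 0) | m']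
      =ᵐ[μ] μ[F | m'] * μ[fun ω => if G ω = b then (1 : ℝ) else 0 | m'] :=
  (hind.comp measurable_id (measurable_id.ite_eq_one_zero b)).condExp_mul hF
    (hG.ite_eq_one_zero b) hFi (integrable_ite_eq_one_zero hG b) (hFi.mul_ite_eq_one_zero hG b)

end ProbabilityTheory.CondIndepFun

namespace PotentialOutcomeModel

variable {Ω 𝓧 : Type} [MeasurableSpace Ω] [StandardBorelSpace Ω] [MeasurableSpace 𝓧]
  {c Cbar ρlo ρhi : ℝ} (Mdl : PotentialOutcomeModel Ω 𝓧 c Cbar ρlo ρhi)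

instance : IsProbabilityMeasure Mdl.P := Mdl.isProb

local notation "σX" => MeasurableSpace.comap (X Mdl) inferInstance
local notation "σXD" => MeasurableSpace.comap (fun ω => (X Mdl ω, D Mdl ω)) inferInstance
local notation "σXDM" =>
  MeasurableSpace.comap (fun ω => (X Mdl ω, D Mdl ω, M Mdl ω)) inferInstance

lemma comap_X_le_comap_XD : σX ≤ σXD :=
  (measurable_fst.comp (comap_measurable fun ω => (Mdl.X ω, Mdl.D ω))).comap_le

lemma comap_XD_le_comap_XDM : σXD ≤ σXDM :=
  ((measurable_fst.prodMk (measurable_fst.comp measurable_snd)).comp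
    (comap_measurable fun ω => (Mdl.X ω, Mdl.D ω, Mdl.M ω))).comap_le

lemma comap_XD_le : σXD ≤ ‹MeasurableSpace Ω› := (Mdl.hX.prodMk Mdl.hD).comap_le

lemma comap_XDM_le : σXDM ≤ ‹MeasurableSpace Ω› :=
  (Mdl.hX.prodMk (Mdl.hD.prodMk Mdl.hM)).comap_le

lemma ae_propensity_ne_zero (d : Fin 2) : ∀ᵐ ω ∂Mdl.P, Mdl.a d (Mdl.X ω) ≠ 0 := by
  filter_upwards [Mdl.ha_bdd d] with ω h using (Mdl.hc.trans h.1).ne'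

lemma ae_mediatorDensity_ne_zero (m : Fin 2) :
    ∀ᵐ ω ∂Mdl.P, Mdl.f m (Mdl.X ω) (Mdl.D ω) ≠ 0 := by
  filter_upwards [Mdl.hf_bdd m 0, Mdl.hf_bdd m 1] with ω h0 h1
  rcases Fin.exists_fin_two.mp ⟨Mdl.D ω, rfl⟩ with h | h <;> rw [h]
  exacts [(Mdl.hρ1.trans_le h0.1).ne', (Mdl.hρ1.trans_le h1.1).ne']

lemma condExp_ite_treatment_mul_ite_mediator (d m : Fin 2) :
    Mdl.P[(fun ω => (if Mdl.D ω = d then (1 : ℝ) else 0) * (if Mdl.M ω = m then 1 else 0)) |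
        σX] =ᵐ[Mdl.P] fun ω => Mdl.f m (Mdl.X ω) d * Mdl.a d (Mdl.X ω) := by
  have hIM := integrable_ite_eq_one_zero (μ := Mdl.P) Mdl.hM m
  have hID := integrable_ite_eq_one_zero (μ := Mdl.P) Mdl.hD d
  have inner : Mdl.P[(fun ω => (if Mdl.D ω = d then (1 : ℝ) else 0) *
        (if Mdl.M ω = m then 1 else 0)) | σXD]
      =ᵐ[Mdl.P] fun ω => Mdl.f m (Mdl.X ω) d * (if Mdl.D ω = d then 1 else 0) := by
    refine (condExp_mul_of_stronglyMeasurable_left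
      ((measurable_snd.ite_eq_one_zero d).stronglyMeasurable_comp_comap _)
      (hIM.ite_eq_one_zero_mul Mdl.hD d) hIM).trans ?_
    filter_upwards [Mdl.hf_eq m] with ω hf
    rw [Pi.mul_apply, ← hf]
    split_ifs with h <;> simp [h]
  calc _ =ᵐ[Mdl.P] Mdl.P[Mdl.P[(fun ω => (if Mdl.D ω = d then (1 : ℝ) else 0) *
          (if Mdl.M ω = m then 1 else 0)) | σXD] | σX] :=
        (condExp_condExp_of_le Mdl.comap_X_le_comap_XD Mdl.comap_XD_le).symm
    _ =ᵐ[Mdl.P] Mdl.P[(fun ω => Mdl.f m (Mdl.X ω) d * (if Mdl.D ω = d then 1 else 0)) | σX] :=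
        condExp_congr_ae inner
    _ =ᵐ[Mdl.P] fun ω => Mdl.f m (Mdl.X ω) d * Mdl.a d (Mdl.X ω) := by
        refine (condExp_mul_of_stronglyMeasurable_left
          ((Mdl.hf_meas m d).stronglyMeasurable_comp_comap _)
          (integrable_condExp.congr inner) hID).trans ?_
        filter_upwards [Mdl.ha_eq d] with ω ha
        rw [Pi.mul_apply, ha]
        rfl

lemma condExp_ite_potentialMediator (d' m : Fin 2) :
    Mdl.P[(fun ω => if Mdl.Mpot d' ω = m then (1 : ℝ) else 0) | σX]
      =ᵐ[Mdl.P] fun ω => Mdl.f m (Mdl.X ω) d' := by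
  have consistency : (fun ω => (if Mdl.Mpot d' ω = m then (1 : ℝ) else 0) *
        (if Mdl.D ω = d' then 1 else 0))
      =ᵐ[Mdl.P] fun ω =>
        (if Mdl.D ω = d' then (1 : ℝ) else 0) * (if Mdl.M ω = m then 1 else 0) := by
    filter_upwards [Mdl.hconsM] with ω hM
    by_cases h : Mdl.D ω = d' <;> simp [h, hM]
  have hci : CondIndepFun σX Mdl.hX.comap_le
      (fun ω => if Mdl.Mpot d' ω = m then (1 : ℝ) else 0) Mdl.D Mdl.P :=
    (Mdl.hMD d').comp (measurable_id.ite_eq_one_zero m) measurable_id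
  have factored := (hci.condExp_mul_ite_eq_one_zero ((Mdl.hMpot d').ite_eq_one_zero m)
      (integrable_ite_eq_one_zero (Mdl.hMpot d') m) Mdl.hD d').symm.trans
    ((condExp_congr_ae consistency).trans (Mdl.condExp_ite_treatment_mul_ite_mediator d' m))
  refine Filter.EventuallyEq.of_mul_right ?_ (Mdl.ae_propensity_ne_zero d')
  filter_upwards [factored, Mdl.ha_eq d'] with ω hω ha
  rw [ha] at hω ⊢
  exact hω

lemma condExp_ite_mul_ite_mul_outcome (d m : Fin 2) :
    Mdl.P[(fun ω => ((if Mdl.D ω = d then (1 : ℝ) else 0) * (if Mdl.M ω = m then 1 else 0)) *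
        Mdl.Y ω) | σXD]
      =ᵐ[Mdl.P] fun ω => ((if Mdl.D ω = d then (1 : ℝ) else 0) * Mdl.u (Mdl.X ω) d m) *
        Mdl.f m (Mdl.X ω) (Mdl.D ω) := by
  have inner : Mdl.P[(fun ω => ((if Mdl.D ω = d then (1 : ℝ) else 0) *
        (if Mdl.M ω = m then 1 else 0)) * Mdl.Y ω) | σXDM]
      =ᵐ[Mdl.P] fun ω => ((if Mdl.D ω = d then (1 : ℝ) else 0) * Mdl.u (Mdl.X ω) d m) *
        (if Mdl.M ω = m then 1 else 0) := by
    refine (condExp_mul_of_stronglyMeasurable_left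
      ((((measurable_fst.comp measurable_snd).ite_eq_one_zero d).mul
        ((measurable_snd.comp measurable_snd).ite_eq_one_zero m)).stronglyMeasurable_comp_comap _)
      ((Mdl.hY.ite_eq_one_zero_mul Mdl.hM m).ite_eq_one_zero_mul Mdl.hD d |>.congr
        (ae_of_all _ fun ω => (mul_assoc _ _ _).symm)) Mdl.hY).trans ?_
    filter_upwards [Mdl.hu_eq] with ω hu
    rw [Pi.mul_apply, ← hu]
    by_cases hD : Mdl.D ω = d <;> by_cases hM : Mdl.M ω = m <;> simp [hD, hM]
  calc _ =ᵐ[Mdl.P] Mdl.P[Mdl.P[(fun ω => ((if Mdl.D ω = d then (1 : ℝ) else 0) *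
          (if Mdl.M ω = m then 1 else 0)) * Mdl.Y ω) | σXDM] | σXD] :=
        (condExp_condExp_of_le Mdl.comap_XD_le_comap_XDM Mdl.comap_XDM_le).symm
    _ =ᵐ[Mdl.P] Mdl.P[(fun ω => ((if Mdl.D ω = d then (1 : ℝ) else 0) *
          Mdl.u (Mdl.X ω) d m) * (if Mdl.M ω = m then 1 else 0)) | σXD] :=
        condExp_congr_ae inner
    _ =ᵐ[Mdl.P] _ := by
        refine (condExp_mul_of_stronglyMeasurable_left
          (((measurable_snd.ite_eq_one_zero d).mul
            ((Mdl.hu_meas d m).comp measurable_fst)).stronglyMeasurable_comp_comap _)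
          (integrable_condExp.congr inner) (integrable_ite_eq_one_zero Mdl.hM m)).trans ?_
        filter_upwards [Mdl.hf_eq m] with ω hf
        rw [Pi.mul_apply, hf]
        rfl

lemma ite_treatment_mul_condExp_potentialOutcome (d m : Fin 2) :
    (fun ω => (if Mdl.D ω = d then (1 : ℝ) else 0) * Mdl.P[Mdl.Ypot d m | σXD] ω)
      =ᵐ[Mdl.P] fun ω => (if Mdl.D ω = d then (1 : ℝ) else 0) * Mdl.u (Mdl.X ω) d m := by
  have hYi := Mdl.hYpot_int d m
  have consistency : (fun ω => (if Mdl.D ω = d then (1 : ℝ) else 0) *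
        (Mdl.Ypot d m ω * (if Mdl.M ω = m then 1 else 0)))
      =ᵐ[Mdl.P] fun ω => ((if Mdl.D ω = d then (1 : ℝ) else 0) *
        (if Mdl.M ω = m then 1 else 0)) * Mdl.Y ω := by
    filter_upwards [Mdl.hconsY] with ω hY
    by_cases hD : Mdl.D ω = d <;> by_cases hM : Mdl.M ω = m <;> simp [hD, hM, hY]
  have factored : (fun ω => (if Mdl.D ω = d then (1 : ℝ) else 0) *
        Mdl.P[(fun ω => Mdl.Ypot d m ω * (if Mdl.M ω = m then 1 else 0)) | σXD] ω)
      =ᵐ[Mdl.P] fun ω => ((if Mdl.D ω = d then (1 : ℝ) else 0) * Mdl.u (Mdl.X ω) d m) *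
        Mdl.f m (Mdl.X ω) (Mdl.D ω) :=
    (condExp_mul_of_stronglyMeasurable_left
      ((measurable_snd.ite_eq_one_zero d).stronglyMeasurable_comp_comap _)
      ((hYi.mul_ite_eq_one_zero Mdl.hM m).ite_eq_one_zero_mul Mdl.hD d)
      (hYi.mul_ite_eq_one_zero Mdl.hM m)).symm.trans
    ((condExp_congr_ae consistency).trans (Mdl.condExp_ite_mul_ite_mul_outcome d m))
  refine Filter.EventuallyEq.of_mul_right ?_ (Mdl.ae_mediatorDensity_ne_zero m)
  filter_upwards [factored,
    (Mdl.hYM d m).condExp_mul_ite_eq_one_zero (Mdl.hYpot_meas d m) hYi Mdl.hM m,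
    Mdl.hf_eq m] with ω hω hci hf
  rw [← hω, hci, Pi.mul_apply, ← hf]
  ring

lemma condExp_potentialOutcome (d m : Fin 2) :
    Mdl.P[Mdl.Ypot d m | σX] =ᵐ[Mdl.P] fun ω => Mdl.u (Mdl.X ω) d m := by
  have hYi := Mdl.hYpot_int d m
  have hID := integrable_ite_eq_one_zero (μ := Mdl.P) Mdl.hD d
  have onTreated := Mdl.ite_treatment_mul_condExp_potentialOutcome d m
  have factored : Mdl.P[(fun ω => Mdl.Ypot d m ω * (if Mdl.D ω = d then 1 else 0)) | σX]
      =ᵐ[Mdl.P] fun ω => Mdl.u (Mdl.X ω) d m * Mdl.a d (Mdl.X ω) :=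
    calc _ =ᵐ[Mdl.P] Mdl.P[Mdl.P[(fun ω => (if Mdl.D ω = d then (1 : ℝ) else 0) *
            Mdl.Ypot d m ω) | σXD] | σX] := by
          simp_rw [mul_comm (Mdl.Ypot d m _)]
          exact (condExp_condExp_of_le Mdl.comap_X_le_comap_XD Mdl.comap_XD_le).symm
      _ =ᵐ[Mdl.P] Mdl.P[(fun ω => (if Mdl.D ω = d then (1 : ℝ) else 0) *
            Mdl.u (Mdl.X ω) d m) | σX] :=
          condExp_congr_ae ((condExp_mul_of_stronglyMeasurable_left
            ((measurable_snd.ite_eq_one_zero d).stronglyMeasurable_comp_comap _)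
            (hYi.ite_eq_one_zero_mul Mdl.hD d) hYi).trans onTreated)
      _ =ᵐ[Mdl.P] _ := by
          simp_rw [mul_comm _ (Mdl.u _ d m)]
          refine (condExp_mul_of_stronglyMeasurable_left
            ((Mdl.hu_meas d m).stronglyMeasurable_comp_comap _) ?_ hID).trans ?_
          · exact (integrable_condExp.ite_eq_one_zero_mul Mdl.hD d).congr onTreated |>.congr
              (ae_of_all _ fun ω => mul_comm _ _)
          · filter_upwards [Mdl.ha_eq d] with ω ha
            rw [Pi.mul_apply, ha]
            rfl
  refine Filter.EventuallyEq.of_mul_right ?_ (Mdl.ae_propensity_ne_zero d)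
  filter_upwards [factored,
    (Mdl.hYD d m).condExp_mul_ite_eq_one_zero (Mdl.hYpot_meas d m) hYi Mdl.hD d,
    Mdl.ha_eq d] with ω hω hci ha
  rw [← hω, hci, ha]
  rfl

lemma condExp_potentialOutcome_mul_ite_potentialMediator (d d' m : Fin 2) :
    Mdl.P[(fun ω => Mdl.Ypot d m ω * (if Mdl.Mpot d' ω = m then 1 else 0)) | σX]
      =ᵐ[Mdl.P] fun ω => Mdl.u (Mdl.X ω) d m * Mdl.f m (Mdl.X ω) d' := by
  filter_upwards [(Mdl.hcross d d' m).condExp_mul_ite_eq_one_zero (Mdl.hYpot_meas d m)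
      (Mdl.hYpot_int d m) (Mdl.hMpot d') m, Mdl.condExp_potentialOutcome d m,
    Mdl.condExp_ite_potentialMediator d' m] with ω hci hY hM
  rw [hci, Pi.mul_apply, hY, hM]

end PotentialOutcomeModel

/-- identification of the natural mediated mean: under consistency,
ignorability, and positivity, `E[Y(d, M(d'))] = E[Σ_m μ(X,d,m) f(m|X,d')] = φ(d,d')`. -/
theorem identification_mediated_mean {Ω 𝓧 : Type} [MeasurableSpace Ω] [StandardBorelSpace Ω]
    [MeasurableSpace 𝓧] {c Cbar ρlo ρhi : ℝ}
    (Mdl : PotentialOutcomeModel Ω 𝓧 c Cbar ρlo ρhi) (d d' : Fin 2) :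
    (∫ ω, Mdl.Ypot d (Mdl.Mpot d' ω) ω ∂Mdl.P) =
      ∫ ω, (∑ m : Fin 2, Mdl.u (Mdl.X ω) d m * Mdl.f m (Mdl.X ω) d') ∂Mdl.P := by
  have hcond := Mdl.condExp_potentialOutcome_mul_ite_potentialMediator d d'
  have hsplit : (fun ω => Mdl.Ypot d (Mdl.Mpot d' ω) ω)
      = fun ω => ∑ m : Fin 2, Mdl.Ypot d m ω * (if Mdl.Mpot d' ω = m then 1 else 0) := by
    funext ω
    simp
  calc _ = ∑ m : Fin 2,
          ∫ ω, Mdl.Ypot d m ω * (if Mdl.Mpot d' ω = m then 1 else 0) ∂Mdl.P := by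
        rw [hsplit, integral_finsetSum _ fun m _ =>
          (Mdl.hYpot_int d m).mul_ite_eq_one_zero (Mdl.hMpot d') m]
    _ = ∑ m : Fin 2, ∫ ω, Mdl.u (Mdl.X ω) d m * Mdl.f m (Mdl.X ω) d' ∂Mdl.P := by
        refine Finset.sum_congr rfl fun m _ => ?_
        rw [← integral_condExp Mdl.hX.comap_le]
        exact integral_congr_ae (hcond m)
    _ = _ := (integral_finsetSum _ fun m _ => integrable_condExp.congr (hcond m)).symm
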